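/- Let A, B be groups with A abelian, b ∈ B, f ∈ ⊕_B A, and suppose h·b (with h ∈ ⊕_B A) is conjugate to b in A ≀ B. Then hb is conjugate to b by an element of the base group ⊕_B A. -/

import Mathlib

open Function SemidirectProduct

def restrictedBase (A B : Type*) [Group A] [Group B] : Subgroup (B → A) where
  carrier := {f | (mulSupport f).Finite}
  one_mem' := by simp
  mul_mem' := fun {f g} hf hg => (hf.union hg).subset (mulSupport_mul f g)
  inv_mem' := fun {f} hf => by simpa using hf

lemma shift_finite (A B : Type*) [Group A] [Group B] (b : B) {f : B → A}
    (hf : (mulSupport f).Finite) : (mulSupport fun x => f (b⁻¹ * x)).Finite := by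
  apply (hf.image (fun x => b * x)).subset
  intro x hx
  exact ⟨b⁻¹ * x, hx, by simp⟩

def wreathAut (A B : Type*) [Group A] [Group B] (b : B) : MulAut (restrictedBase A B) where
  toFun f := ⟨fun x => (f : B → A) (b⁻¹ * x), shift_finite A B b f.2⟩
  invFun f := ⟨fun x => (f : B → A) (b * x), by
    have hs := shift_finite A B b⁻¹ f.2
    simp only [inv_inv] at hs
    exact hs⟩
  left_inv f := Subtype.ext (funext fun x => by simp)
  right_inv f := Subtype.ext (funext fun x => by simp)
  map_mul' f g := rfl

def wreathHom (A B : Type*) [Group A] [Group B] : B →* MulAut (restrictedBase A B) where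
  toFun := wreathAut A B
  map_one' := by
    ext f x
    simp [wreathAut]
  map_mul' b c := by
    ext f x
    simp [wreathAut, mul_assoc]

abbrev Wreath (A B : Type*) [Group A] [Group B] :=
  restrictedBase A B ⋊[wreathHom A B] B

/-- `A` abelian, `h` in the base group. If `hb` is conjugate to `b` in
`A ≀ B`, then `hb` is conjugate to `b` by an element of the base group `⊕_B A`. -/
theorem stmt10 (A B : Type*) [CommGroup A] [Group B] (b : B) (h : restrictedBase A B)
    (hc : ∃ x : Wreath A B,
        x * SemidirectProduct.inr b * x⁻¹
          = SemidirectProduct.inl h * SemidirectProduct.inr b) :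
    ∃ k : restrictedBase A B,
      (SemidirectProduct.inl k : Wreath A B) * SemidirectProduct.inr b *
          (SemidirectProduct.inl k : Wreath A B)⁻¹
        = SemidirectProduct.inl h * SemidirectProduct.inr b := by
  obtain ⟨x, hx⟩ := hc
  refine ⟨x.left, ?_⟩
  have hr : x.right * b * x.right⁻¹ = b := by
    have := congrArg SemidirectProduct.right hx
    simpa using this
  have hl : x.left * (wreathHom A B (x.right * b * x.right⁻¹)) x.left⁻¹ = h := by
    have := congrArg SemidirectProduct.left hx
    simpa [mul_assoc, map_mul] using this
  rw [hr] at hl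
  apply SemidirectProduct.ext
  · simpa using hl
  · simp
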